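/- arXiv:2603.05903 — 3 statements merged into one kernel-verified Lean document; each statement's English description precedes it below -/
import Mathlib

section
/- Let V(x) = ω₁(√(x₁²+x₂²) − A)² + ω₂x₃² on ℝ³ with ω₁, ω₂, A > 0. Then there exist constants C > 0 and β₀ > 0 such that for all 0 < β < β₀, ∫_{ℝ³} ((β − V(x))₊)^{5/2} dx ≤ C β^{7/2}, where (·)₊ denotes the positive part. -/
/-!
The integrand is at most `β^(5/2)` and vanishes outside `{V < β}`. That sublevel set lies in the
solid torus `|x₃| ≤ √(β/ω₂)`, `|√(x₁² + x₂²) - A| ≤ √(β/ω₁)`, whose volume, once `β ≤ ω₁ A²`, is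
`2√(β/ω₂)` times the annulus area `4πA√(β/ω₁)`, i.e. `8πAβ/√(ω₁ω₂)`.
-/

open MeasureTheory Metric Real

theorem abs_le_sqrt_div_of_mul_sq_le {ω t β : ℝ} (hω : 0 < ω) (h : ω * t ^ 2 ≤ β) :
    |t| ≤ √(β / ω) :=
  abs_le_sqrt ((le_div_iff₀ hω).2 (by linarith))

theorem max_sub_zero_rpow_le {β v p : ℝ} (hβ : 0 ≤ β) (hv : 0 ≤ v) (hp : 0 ≤ p) :
    max (β - v) 0 ^ p ≤ β ^ p :=
  rpow_le_rpow (le_max_right _ _) (max_le (by linarith) hβ) hp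

theorem max_sub_zero_rpow_eq_zero {β v p : ℝ} (hv : β ≤ v) (hp : p ≠ 0) :
    max (β - v) 0 ^ p = 0 := by
  rw [max_eq_right (by linarith), zero_rpow hp]

theorem sqrt_div_mul_sqrt_div {β b : ℝ} (hβ : 0 ≤ β) (a : ℝ) (hb : 0 ≤ b) :
    √(β / a) * √(β / b) = β / √(a * b) := by
  rw [← sqrt_mul' _ (div_nonneg hβ hb), div_mul_div_comm, sqrt_div (mul_self_nonneg β),
    sqrt_mul_self hβ]

theorem EuclideanSpace.volume_closedBall_diff_ball_fin_two (x : EuclideanSpace ℝ (Fin 2))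
    {r R : ℝ} (hr : 0 ≤ r) (hrR : r ≤ R) :
    volume (closedBall x R \ ball x r) = ENNReal.ofReal (π * (R ^ 2 - r ^ 2)) := by
  rw [measure_sdiff (ball_subset_closedBall.trans (closedBall_subset_closedBall hrR))
      measurableSet_ball.nullMeasurableSet measure_ball_lt_top.ne,
    volume_closedBall_fin_two, volume_ball_fin_two, ← ENNReal.ofReal_pow (hr.trans hrR),
    ← ENNReal.ofReal_pow hr, ← ENNReal.ofReal_mul (by positivity),
    ← ENNReal.ofReal_mul (by positivity), ← ENNReal.ofReal_sub _ (by positivity)]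
  congr 1
  ring

theorem EuclideanSpace.norm_fin_two (p : Fin 2 → ℝ) :
    ‖WithLp.toLp 2 p‖ = √(p 0 ^ 2 + p 1 ^ 2) := by
  simp [EuclideanSpace.norm_eq, Fin.sum_univ_two]

namespace RingPotential

def annulus (A δ : ℝ) : Set (Fin 2 → ℝ) := {p | |√(p 0 ^ 2 + p 1 ^ 2) - A| ≤ δ}

theorem volume_annulus {A δ : ℝ} (hδ : 0 ≤ δ) (hδA : δ ≤ A) :
    volume (annulus A δ) = ENNReal.ofReal (4 * π * A * δ) := by
  have hpre : annulus A δ = WithLp.toLp 2 ⁻¹' (closedBall 0 (A + δ) \ ball 0 (A - δ)) := by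
    ext p
    simp only [annulus, Set.mem_ofPred_eq, Set.mem_preimage, Set.mem_sdiff, mem_closedBall,
      mem_ball, dist_zero_right, EuclideanSpace.norm_fin_two, abs_le, not_lt]
    constructor <;> rintro ⟨h₁, h₂⟩ <;> constructor <;> linarith
  rw [hpre, (PiLp.volume_preserving_toLp (Fin 2)).measure_preimage
      (measurableSet_closedBall.diff measurableSet_ball).nullMeasurableSet,
    EuclideanSpace.volume_closedBall_diff_ball_fin_two _ (by linarith) (by linarith)]
  congr 1
  ring

def ringTube (A δ h : ℝ) : Set (Fin 3 → ℝ) :=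
  {x | |x 2| ≤ h ∧ |√(x 0 ^ 2 + x 1 ^ 2) - A| ≤ δ}

theorem ringTube_eq_preimage (A δ h : ℝ) :
    ringTube A δ h =
      MeasurableEquiv.piFinSuccAbove (fun _ ↦ ℝ) 2 ⁻¹' (Set.Icc (-h) h ×ˢ annulus A δ) := by
  ext x
  simp only [ringTube, Set.mem_preimage, Set.mem_prod, Set.mem_Icc, ← abs_le]
  rfl

theorem volume_ringTube {A δ h : ℝ} (hh : 0 ≤ h) (hδ : 0 ≤ δ) (hδA : δ ≤ A) :
    volume (ringTube A δ h) = ENNReal.ofReal (8 * π * A * δ * h) := by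
  rw [ringTube_eq_preimage,
    (volume_preserving_piFinSuccAbove (fun _ ↦ ℝ) 2).measure_preimage_equiv,
    Measure.volume_eq_prod, Measure.prod_prod, Real.volume_Icc, volume_annulus hδ hδA,
    ← ENNReal.ofReal_mul (by linarith)]
  congr 1
  ring

theorem mem_ringTube_of_lt {ω₁ ω₂ A β : ℝ} (hω₁ : 0 < ω₁) (hω₂ : 0 < ω₂) {x : Fin 3 → ℝ}
    (hx : ω₁ * (√(x 0 ^ 2 + x 1 ^ 2) - A) ^ 2 + ω₂ * x 2 ^ 2 < β) :
    x ∈ ringTube A √(β / ω₁) √(β / ω₂) :=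
  ⟨abs_le_sqrt_div_of_mul_sq_le hω₂ (by nlinarith [sq_nonneg (√(x 0 ^ 2 + x 1 ^ 2) - A)]),
    abs_le_sqrt_div_of_mul_sq_le hω₁ (by nlinarith [sq_nonneg (x 2)])⟩

end RingPotential

open RingPotential in
/-- For the ring-shaped potential
`V x = ω₁ (√(x₁²+x₂²) − A)² + ω₂ x₃²` with `ω₁, ω₂, A > 0`, there exist `C > 0` and
`β₀ > 0` such that for all `0 < β < β₀`,
`∫ ((β − V x)₊)^(5/2) dx ≤ C β^(7/2)`. -/
theorem stmt0 (ω₁ ω₂ A : ℝ) (hω₁ : 0 < ω₁) (hω₂ : 0 < ω₂) (hA : 0 < A)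
    (V : (Fin 3 → ℝ) → ℝ)
    (hV : ∀ x : Fin 3 → ℝ,
      V x = ω₁ * (Real.sqrt ((x 0) ^ 2 + (x 1) ^ 2) - A) ^ 2 + ω₂ * (x 2) ^ 2) :
    ∃ C > (0 : ℝ), ∃ β₀ > (0 : ℝ), ∀ β : ℝ, 0 < β → β < β₀ →
      ∫ x : Fin 3 → ℝ, (max (β - V x) 0) ^ ((5 : ℝ) / 2)
        ≤ C * β ^ ((7 : ℝ) / 2) := by
  refine ⟨8 * π * A / √(ω₁ * ω₂), by positivity, ω₁ * A ^ 2, by positivity, fun β hβ hβ₀ ↦ ?_⟩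
  set S := ringTube A √(β / ω₁) √(β / ω₂)
  have hδA : √(β / ω₁) ≤ A := (sqrt_le_left hA.le).2 ((div_le_iff₀' hω₁).2 hβ₀.le)
  have hvol := volume_ringTube (sqrt_nonneg (β / ω₂)) (sqrt_nonneg (β / ω₁)) hδA
  have hS : volume.real S = 8 * π * A / √(ω₁ * ω₂) * β := by
    rw [measureReal_def, hvol, ENNReal.toReal_ofReal (by positivity), mul_assoc _ √(β / ω₁),
      sqrt_div_mul_sqrt_div hβ.le _ hω₂.le]
    ring
  have hV_nonneg : ∀ x, 0 ≤ V x := fun x ↦ by rw [hV]; positivity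
  have hvanish : ∀ x ∉ S, max (β - V x) 0 ^ ((5 : ℝ) / 2) = 0 := fun x hx ↦
    max_sub_zero_rpow_eq_zero (not_lt.1 fun h ↦ hx (mem_ringTube_of_lt hω₁ hω₂ (hV x ▸ h)))
      (by norm_num)
  have hbound : ∀ x ∈ S, ‖max (β - V x) 0 ^ ((5 : ℝ) / 2)‖ ≤ β ^ ((5 : ℝ) / 2) := fun x _ ↦ by
    rw [Real.norm_of_nonneg (by positivity)]
    exact max_sub_zero_rpow_le hβ.le (hV_nonneg x) (by norm_num)
  calc ∫ x, max (β - V x) 0 ^ ((5 : ℝ) / 2)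
      = ∫ x in S, max (β - V x) 0 ^ ((5 : ℝ) / 2) :=
        (setIntegral_eq_integral_of_forall_compl_eq_zero hvanish).symm
    _ ≤ β ^ ((5 : ℝ) / 2) * volume.real S :=
        (le_norm_self _).trans (norm_setIntegral_le_of_norm_le_const
          (hvol ▸ ENNReal.ofReal_lt_top) hbound)
    _ = 8 * π * A / √(ω₁ * ω₂) * β ^ ((7 : ℝ) / 2) := by
        rw [hS, show (7 : ℝ) / 2 = 5 / 2 + 1 by norm_num, rpow_add hβ, rpow_one]
        ring
end

section
/- Suppose real-valued functions I : (0, a*) → ℝ and J : (0, a*) → ℝ satisfy: (i) for all 0 < b < a < a*, I(b) ≤ I(a) + (a − b)·J(a); (ii) there are constants C₃, C₄ > 0 with C₃(a* − a)^{3/5} ≤ I(a) ≤ C₄(a* − a)^{1/2} for a near a*. Then there exists K > 0 such that J(a) ≥ K(a* − a)^{−1/3} for all a sufficiently close to a* from below. -/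
/-!
Test the comparison inequality at the level `b = a - t` with `t = C₀ ε^(q/p)`, where
`ε = a* - a`. The lower bound at `b` gives `I b ≥ C₃ t^p = C₃ C₀^p ε^q`, the upper bound at `a`
gives `I a ≤ C₄ ε^q`, so `t J(a) ≥ (C₃ C₀^p - C₄) ε^q`. Taking `C₃ C₀^p = C₄ + C₃` leaves
`J(a) ≥ (C₃ / C₀) ε^(q - q/p)`; for `p = 3/5`, `q = 1/2` the exponent is `-1/3`.
-/

lemma le_of_comparison_at_scale {C₀ C₃ C₄ p q ε Ia Ib Ja : ℝ} (hp : 0 < p) (hC₃ : 0 ≤ C₃)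
    (hC₀ : 0 < C₀) (hC₀p : C₃ * C₀ ^ p = C₄ + C₃) (hε : 0 < ε)
    (hcomp : Ib ≤ Ia + C₀ * ε ^ (q / p) * Ja)
    (hIb : C₃ * (ε + C₀ * ε ^ (q / p)) ^ p ≤ Ib) (hIa : Ia ≤ C₄ * ε ^ q) :
    C₃ / C₀ * ε ^ (q - q / p) ≤ Ja := by
  set t := C₀ * ε ^ (q / p) with ht_def
  have ht : 0 < t := by positivity
  have htp : C₃ * t ^ p = (C₄ + C₃) * ε ^ q := by
    rw [ht_def, Real.mul_rpow hC₀.le (by positivity), ← Real.rpow_mul hε.le,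
      div_mul_cancel₀ q hp.ne', ← mul_assoc, hC₀p]
  have hmono : C₃ * t ^ p ≤ C₃ * (ε + t) ^ p := by gcongr; linarith
  have key : C₃ * ε ^ q ≤ t * Ja := by nlinarith
  have hK : C₃ / C₀ * ε ^ (q - q / p) = C₃ * ε ^ q / t := by
    rw [ht_def, Real.rpow_sub hε]
    field_simp
  rw [hK, div_le_iff₀ ht]
  linarith

lemma exists_pos_forall_add_mul_rpow_lt {C r m : ℝ} (hr : 0 < r) (hm : 0 < m) :
    ∃ δ > 0, ∀ ε, 0 < ε → ε < δ → ε + C * ε ^ r < m := by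
  have hcont : ContinuousAt (fun ε : ℝ => ε + C * ε ^ r) 0 :=
    continuousAt_id.add (continuousAt_const.mul (Real.continuousAt_rpow_const 0 r (.inr hr.le)))
  obtain ⟨δ, hδ, hball⟩ := Metric.continuousAt_iff.mp hcont m hm
  refine ⟨δ, hδ, fun ε hε hεδ => ?_⟩
  have h := hball (x := ε) (by rwa [Real.dist_0_eq_abs, abs_of_pos hε])
  simp only [Real.zero_rpow hr.ne', mul_zero, add_zero, Real.dist_eq, sub_zero] at h
  exact (abs_lt.mp h).2

theorem exists_rpow_le_of_comparison {aStar C₃ C₄ δ₀ p q : ℝ} {I J : ℝ → ℝ}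
    (haStar : 0 < aStar) (hp : 0 < p) (hq : 0 < q) (hC₃ : 0 < C₃) (hC₄ : 0 ≤ C₄) (hδ₀ : 0 < δ₀)
    (hcomp : ∀ a b : ℝ, 0 < b → b < a → a < aStar → I b ≤ I a + (a - b) * J a)
    (hbounds : ∀ a : ℝ, aStar - δ₀ < a → a < aStar →
      C₃ * (aStar - a) ^ p ≤ I a ∧ I a ≤ C₄ * (aStar - a) ^ q) :
    ∃ K > (0 : ℝ), ∃ δ > (0 : ℝ), ∀ a : ℝ, aStar - δ < a → a < aStar →
      K * (aStar - a) ^ (q - q / p) ≤ J a := by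
  set C₀ := ((C₄ + C₃) / C₃) ^ p⁻¹
  have hbase : 0 < (C₄ + C₃) / C₃ := by positivity
  have hC₀ : 0 < C₀ := by positivity
  have hC₀p : C₃ * C₀ ^ p = C₄ + C₃ := by
    rw [← Real.rpow_mul hbase.le, inv_mul_cancel₀ hp.ne', Real.rpow_one]
    field_simp
  obtain ⟨δ, hδ, hsmall⟩ := exists_pos_forall_add_mul_rpow_lt (C := C₀) (div_pos hq hp)
    (lt_min hδ₀ haStar)
  refine ⟨C₃ / C₀, by positivity, δ, hδ, fun a haδ haStar' => ?_⟩
  set ε := aStar - a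
  set t := C₀ * ε ^ (q / p)
  have hε : 0 < ε := sub_pos.mpr haStar'
  have ht : 0 < t := by positivity
  have hlt := lt_min_iff.mp (hsmall ε hε (by linarith))
  have hb : aStar - (a - t) = ε + t := by ring
  have hIb := (hbounds (a - t) (by linarith) (by linarith)).1
  have hIa := (hbounds a (by linarith) haStar').2
  have hcab := hcomp a (a - t) (by linarith) (by linarith) haStar'
  rw [sub_sub_cancel] at hcab
  rw [hb] at hIb
  exact le_of_comparison_at_scale hp hC₃.le hC₀ hC₀p hε hcab hIb hIa

/-- If `I(b) ≤ I(a) + (a−b)·J(a)` for all `0 < b < a < a*`, and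
`C₃(a*−a)^(3/5) ≤ I(a) ≤ C₄(a*−a)^(1/2)` near `a*`, then there is `K > 0` with
`J(a) ≥ K (a*−a)^(−1/3)` for `a` close to `a*` from below. -/
theorem stmt2 (aStar : ℝ) (haStar : 0 < aStar) (I J : ℝ → ℝ)
    (hcomp : ∀ a b : ℝ, 0 < b → b < a → a < aStar → I b ≤ I a + (a - b) * J a)
    (C₃ C₄ : ℝ) (hC₃ : 0 < C₃) (hC₄ : 0 < C₄)
    (δ₀ : ℝ) (hδ₀ : 0 < δ₀)
    (hbounds : ∀ a : ℝ, aStar - δ₀ < a → a < aStar →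
      C₃ * (aStar - a) ^ ((3 : ℝ) / 5) ≤ I a ∧ I a ≤ C₄ * (aStar - a) ^ ((1 : ℝ) / 2)) :
    ∃ K > (0 : ℝ), ∃ δ > (0 : ℝ), ∀ a : ℝ, aStar - δ < a → a < aStar →
      K * (aStar - a) ^ (-(1 : ℝ) / 3) ≤ J a := by
  have hexp : (1 : ℝ) / 2 - 1 / 2 / (3 / 5) = -1 / 3 := by norm_num
  simpa only [hexp] using exists_rpow_le_of_comparison haStar (by norm_num) (by norm_num) hC₃
    hC₄.le hδ₀ hcomp hbounds
end

section
/- Suppose w : ℝ³ → ℝ is a C² function satisfying −Δw ≤ (μ/2) w on ℝ³ \ B_M(0) for some μ < 0 and M > 0, with w ≥ 0, w bounded, and w(x) → 0 as |x| → ∞. Then there exists C > 0 such that w(x) ≤ C e^{−√(|μ|/2) |x|} for all x ∈ ℝ³. -/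
/-!
Set `k = √(|μ|/2)`, so that the hypothesis reads `Δw ≥ k² w` outside `B_M(0)`, and compare `w`
with the barrier `φ(x) = C e^{-k|x|}`, with `C` so large that `w ≤ φ` on the ball. If `w > φ`
somewhere, then `w - φ` tends to `0` at infinity and so attains a positive global maximum at some
`x₀` with `|x₀| > M`. There the Hessian of `w` is dominated by that of `φ` in every direction,
so `Δw(x₀) ≤ Δφ(x₀) = (k² - 2k/|x₀|) φ(x₀) ≤ k² φ(x₀) < k² w(x₀) ≤ Δw(x₀)`.
-/

open Filter

/-- The Laplacian of a scalar function on `ℝ³`, as the trace of the second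
derivative. -/
noncomputable def laplacian (f : EuclideanSpace ℝ (Fin 3) → ℝ)
    (x : EuclideanSpace ℝ (Fin 3)) : ℝ :=
  ∑ i : Fin 3,
    iteratedFDeriv ℝ 2 f x ![EuclideanSpace.single i 1, EuclideanSpace.single i 1]

open Topology Real

/- If `c > 0`, Mathlib's second-derivative test makes `a` also a local minimum, so `g` is
locally constant, `g'` vanishes near `a` and `c = 0`. -/
theorem IsLocalMax.nonpos_of_hasDerivAt_deriv {g g' : ℝ → ℝ} {a c : ℝ} (hmax : IsLocalMax g a)
    (hg : ∀ᶠ t in 𝓝 a, HasDerivAt g (g' t) t) (hg' : HasDerivAt g' c a) : c ≤ 0 := by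
  by_contra! hc
  have hderiv : deriv g =ᶠ[𝓝 a] g' := hg.mono fun t ht => ht.deriv
  have hmin : IsLocalMin g a := isLocalMin_of_deriv_deriv_pos
    (by rwa [hderiv.deriv_eq, hg'.deriv])
    (by rw [hderiv.eq_of_nhds]; exact hmax.hasDerivAt_eq_zero hg.self_of_nhds)
    hg.self_of_nhds.continuousAt
  have hconst : g =ᶠ[𝓝 a] fun _ => g a :=
    (hmin.and hmax).mono fun t ht => le_antisymm ht.2 ht.1
  have hzero : g' =ᶠ[𝓝 a] fun _ => 0 := by
    filter_upwards [hg, hconst.eventually_nhds] with t ht hconst_t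
    exact ht.unique ((hasDerivAt_const t (g a)).congr_of_eventuallyEq hconst_t)
  exact hc.ne' ((hg'.congr_of_eventuallyEq hzero.symm).unique (hasDerivAt_const a 0))

section Line

variable {E : Type*} [NormedAddCommGroup E] [NormedSpace ℝ E] {f : E → ℝ}

theorem hasDerivAt_comp_add_smul {x m : E} {t : ℝ} (hf : DifferentiableAt ℝ f (x + t • m)) :
    HasDerivAt (fun s : ℝ => f (x + s • m)) (fderiv ℝ f (x + t • m) m) t := by
  have hline : HasDerivAt (fun s : ℝ => x + s • m) m t := by
    simpa using ((hasDerivAt_id t).smul_const m).const_add x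
  exact hf.hasFDerivAt.comp_hasDerivAt t hline

theorem hasDerivAt_fderiv_comp_add_smul {x : E} (hf : DifferentiableAt ℝ (fderiv ℝ f) x)
    (m : E) :
    HasDerivAt (fun t : ℝ => fderiv ℝ f (x + t • m) m) (iteratedFDeriv ℝ 2 f x ![m, m]) 0 := by
  have hline : HasDerivAt (fun s : ℝ => x + s • m) m 0 := by
    simpa using ((hasDerivAt_id (0 : ℝ)).smul_const m).const_add x
  have hcomp := (ContinuousLinearMap.apply ℝ ℝ m).hasFDerivAt.comp_hasDerivAt 0
    (hf.hasFDerivAt.comp_hasDerivAt_of_eq 0 hline (by simp))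
  rw [iteratedFDeriv_two_apply]
  simpa [Function.comp_def] using hcomp

theorem iteratedFDeriv_two_le_of_isLocalMax_sub (hf : ContDiff ℝ 2 f) {x m : E}
    {ψ ψ' : ℝ → ℝ} {c : ℝ} (hmax : IsLocalMax (fun t => f (x + t • m) - ψ t) 0)
    (hψ : ∀ᶠ t in 𝓝 0, HasDerivAt ψ (ψ' t) t) (hψ' : HasDerivAt ψ' c 0) :
    iteratedFDeriv ℝ 2 f x ![m, m] ≤ c := by
  have hf₁ : Differentiable ℝ f := hf.differentiable (by norm_num)
  have hf₂ : Differentiable ℝ (fderiv ℝ f) :=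
    (hf.fderiv_right (m := 1) (by norm_num)).differentiable (by norm_num)
  have := hmax.nonpos_of_hasDerivAt_deriv
    (hψ.mono fun t ht => (hasDerivAt_comp_add_smul (hf₁ _)).sub ht)
    ((hasDerivAt_fderiv_comp_add_smul (hf₂ x) m).sub hψ')
  linarith

end Line

section Barrier

/- `√(r² + 2bt + t²)` is `‖x + t • e‖` for a unit vector `e`, with `r = ‖x‖` and `b = ⟪x, e⟫`. -/
theorem hasDerivAt_sqrt_sq_add_mul_add_sq (r b : ℝ) {t : ℝ}
    (hq : 0 < r ^ 2 + 2 * b * t + t ^ 2) :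
    HasDerivAt (fun t => √(r ^ 2 + 2 * b * t + t ^ 2))
      ((b + t) / √(r ^ 2 + 2 * b * t + t ^ 2)) t := by
  have hq' : HasDerivAt (fun t : ℝ => r ^ 2 + 2 * b * t + t ^ 2) (2 * (b + t)) t :=
    ((((hasDerivAt_id t).const_mul (2 * b)).const_add (r ^ 2)).add
      (hasDerivAt_pow 2 t)).congr_deriv (by simp; ring)
  refine (hq'.sqrt hq.ne').congr_deriv ?_
  field_simp

theorem hasDerivAt_mul_exp_neg_sqrt (C k r b : ℝ) {t : ℝ} (hq : 0 < r ^ 2 + 2 * b * t + t ^ 2) :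
    HasDerivAt (fun t => C * exp (-k * √(r ^ 2 + 2 * b * t + t ^ 2)))
      (C * exp (-k * √(r ^ 2 + 2 * b * t + t ^ 2)) *
        (-k * ((b + t) / √(r ^ 2 + 2 * b * t + t ^ 2)))) t :=
  (((hasDerivAt_sqrt_sq_add_mul_add_sq r b hq).const_mul (-k)).exp.const_mul C).congr_deriv
    (by ring)

theorem hasDerivAt_mul_exp_neg_sqrt_deriv (C k b : ℝ) {r : ℝ} (hr : 0 < r) :
    HasDerivAt (fun t => C * exp (-k * √(r ^ 2 + 2 * b * t + t ^ 2)) *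
        (-k * ((b + t) / √(r ^ 2 + 2 * b * t + t ^ 2))))
      (C * exp (-k * r) * (k ^ 2 * b ^ 2 / r ^ 2 - k * (r ^ 2 - b ^ 2) / r ^ 3)) 0 := by
  have hsqrt : HasDerivAt (fun t => √(r ^ 2 + 2 * b * t + t ^ 2)) (b / r) 0 := by
    simpa [hr.le] using hasDerivAt_sqrt_sq_add_mul_add_sq r b (t := 0) (by simp [hr])
  have hexp := (hsqrt.const_mul (-k)).exp.const_mul C
  have hquot := (((hasDerivAt_id 0).const_add b).div hsqrt
    (by simp [sqrt_sq hr.le, hr.ne'])).const_mul (-k)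
  refine (hexp.mul hquot).congr_deriv ?_
  simp only [Pi.div_apply, id, mul_zero, add_zero, ne_eq, OfNat.ofNat_ne_zero, not_false_eq_true,
    zero_pow, sqrt_sq hr.le]
  field_simp
  ring

variable {F : Type*} [NormedAddCommGroup F] [InnerProductSpace ℝ F]

theorem norm_add_smul_eq_sqrt (x : F) {e : F} (he : ‖e‖ = 1) (t : ℝ) :
    ‖x + t • e‖ = √(‖x‖ ^ 2 + 2 * inner ℝ x e * t + t ^ 2) := by
  rw [← sqrt_sq (norm_nonneg (x + t • e)), norm_add_sq_real, real_inner_smul_right, norm_smul,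
    he, mul_one, Real.norm_eq_abs, sq_abs]
  ring_nf

theorem iteratedFDeriv_two_le_of_isLocalMax_sub_mul_exp {f : F → ℝ} (hf : ContDiff ℝ 2 f)
    {x e : F} (hx : x ≠ 0) (he : ‖e‖ = 1) {C k : ℝ}
    (hmax : IsLocalMax (fun y => f y - C * exp (-k * ‖y‖)) x) :
    iteratedFDeriv ℝ 2 f x ![e, e] ≤ C * exp (-k * ‖x‖) *
      (k ^ 2 * inner ℝ x e ^ 2 / ‖x‖ ^ 2 - k * (‖x‖ ^ 2 - inner ℝ x e ^ 2) / ‖x‖ ^ 3) := by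
  set r := ‖x‖
  set b := inner ℝ x e
  have hr : 0 < r := norm_pos_iff.mpr hx
  have hline : IsLocalMax
      (fun t => f (x + t • e) - C * exp (-k * √(r ^ 2 + 2 * b * t + t ^ 2))) 0 := by
    have hmax' : IsLocalMax (fun y => f y - C * exp (-k * ‖y‖)) (x + (0 : ℝ) • e) := by
      simpa using hmax
    have := hmax'.comp_continuous (g := fun t : ℝ => x + t • e) (by fun_prop)
    simpa [Function.comp_def, norm_add_smul_eq_sqrt x he] using this
  have hq : ∀ᶠ t in 𝓝 (0 : ℝ), 0 < r ^ 2 + 2 * b * t + t ^ 2 :=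
    (Continuous.tendsto (by fun_prop) 0).eventually_const_lt (by simpa using pow_pos hr 2)
  exact iteratedFDeriv_two_le_of_isLocalMax_sub hf hline
    (hq.mono fun t ht => hasDerivAt_mul_exp_neg_sqrt C k r b ht)
    (hasDerivAt_mul_exp_neg_sqrt_deriv C k b hr)

end Barrier

theorem tendsto_mul_exp_neg_mul_norm_cocompact {E : Type*} [NormedAddCommGroup E] [ProperSpace E]
    (C : ℝ) {k : ℝ} (hk : 0 < k) :
    Tendsto (fun x : E => C * exp (-k * ‖x‖)) (cocompact E) (𝓝 0) := by
  have := (tendsto_exp_neg_atTop_nhds_zero.comp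
    ((tendsto_norm_cocompact_atTop (E := E)).const_mul_atTop hk)).const_mul C
  simpa [Function.comp_def] using this

section Comparison

theorem laplacian_le_of_isLocalMax_sub_mul_exp {w : EuclideanSpace ℝ (Fin 3) → ℝ}
    (hw : ContDiff ℝ 2 w) {x : EuclideanSpace ℝ (Fin 3)} (hx : x ≠ 0) {C k : ℝ}
    (hmax : IsLocalMax (fun y => w y - C * exp (-k * ‖y‖)) x) :
    laplacian w x ≤ C * exp (-k * ‖x‖) * (k ^ 2 - 2 * k / ‖x‖) := by
  have hr : ‖x‖ ≠ 0 := norm_ne_zero_iff.mpr hx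
  have hsum : ∑ i, x i ^ 2 = ‖x‖ ^ 2 := by
    simp [EuclideanSpace.norm_sq_eq]
  calc laplacian w x
      ≤ ∑ i : Fin 3, C * exp (-k * ‖x‖) *
          (k ^ 2 * x i ^ 2 / ‖x‖ ^ 2 - k * (‖x‖ ^ 2 - x i ^ 2) / ‖x‖ ^ 3) :=
        Finset.sum_le_sum fun i _ => by
          simpa [EuclideanSpace.inner_single_right] using
            iteratedFDeriv_two_le_of_isLocalMax_sub_mul_exp hw hx
              (e := EuclideanSpace.single i 1) (by simp) hmax
    _ = C * exp (-k * ‖x‖) *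
          (k ^ 2 * (∑ i, x i ^ 2) / ‖x‖ ^ 2 - k * (3 * ‖x‖ ^ 2 - ∑ i, x i ^ 2) / ‖x‖ ^ 3) := by
        simp only [Fin.sum_univ_three]
        ring
    _ = C * exp (-k * ‖x‖) * (k ^ 2 - 2 * k / ‖x‖) := by
        rw [hsum]
        field_simp
        ring

theorem le_mul_exp_neg_mul_norm_of_mul_le_laplacian {w : EuclideanSpace ℝ (Fin 3) → ℝ}
    (hw : ContDiff ℝ 2 w) {k R C : ℝ} (hk : 0 < k) (hR : 0 ≤ R) (hC : 0 ≤ C)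
    (hlap : ∀ x, R ≤ ‖x‖ → k ^ 2 * w x ≤ laplacian w x)
    (hdecay : Tendsto w (cocompact _) (𝓝 0))
    (hball : ∀ x, ‖x‖ ≤ R → w x ≤ C * exp (-k * ‖x‖)) (x : EuclideanSpace ℝ (Fin 3)) :
    w x ≤ C * exp (-k * ‖x‖) := by
  by_contra! hx
  have hvx : 0 < w x - C * exp (-k * ‖x‖) := sub_pos.2 hx
  have hvcont : Continuous fun y => w y - C * exp (-k * ‖y‖) := hw.continuous.sub (by fun_prop)
  have hvdecay : Tendsto (fun y => w y - C * exp (-k * ‖y‖)) (cocompact _) (𝓝 0) := by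
    simpa using hdecay.sub (tendsto_mul_exp_neg_mul_norm_cocompact C hk)
  obtain ⟨x₀, hx₀⟩ := hvcont.exists_forall_ge' x (hvdecay.eventually (ge_mem_nhds hvx))
  have hw₀ : C * exp (-k * ‖x₀‖) < w x₀ := sub_pos.1 (hvx.trans_le (hx₀ x))
  have hR₀ : R < ‖x₀‖ := by
    by_contra! h
    exact (hball x₀ h).not_gt hw₀
  have hx₀ne : x₀ ≠ 0 := norm_pos_iff.mp (hR.trans_lt hR₀)
  have hcorr : 0 ≤ 2 * k / ‖x₀‖ * (C * exp (-k * ‖x₀‖)) := by positivity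
  have := calc laplacian w x₀
      ≤ C * exp (-k * ‖x₀‖) * (k ^ 2 - 2 * k / ‖x₀‖) :=
        laplacian_le_of_isLocalMax_sub_mul_exp hw hx₀ne (Eventually.of_forall hx₀)
    _ ≤ k ^ 2 * (C * exp (-k * ‖x₀‖)) := by linarith
    _ < k ^ 2 * w x₀ := by gcongr
    _ ≤ laplacian w x₀ := hlap x₀ hR₀.le
  exact this.false

end Comparison

theorem stmt8_general (w : EuclideanSpace ℝ (Fin 3) → ℝ) (hw : ContDiff ℝ 2 w)
    (μ M : ℝ) (hμ : μ < 0) (hM : 0 < M)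
    (hineq : ∀ x, M ≤ ‖x‖ → -laplacian w x ≤ (μ / 2) * w x)
    (hbdd : ∃ B : ℝ, ∀ x, w x ≤ B)
    (hdecay : Tendsto w (cocompact (EuclideanSpace ℝ (Fin 3))) (nhds 0)) :
    ∃ C > (0 : ℝ), ∀ x, w x ≤ C * Real.exp (-Real.sqrt (|μ| / 2) * ‖x‖) := by
  obtain ⟨B, hB⟩ := hbdd
  set k := Real.sqrt (|μ| / 2)
  have hk : 0 < k := Real.sqrt_pos.2 (by simpa using hμ.ne)
  have hk2 : k ^ 2 = -(μ / 2) := by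
    rw [Real.sq_sqrt (by positivity), abs_of_neg hμ]
    ring
  refine ⟨(|B| + 1) * Real.exp (k * M), by positivity,
    le_mul_exp_neg_mul_norm_of_mul_le_laplacian hw hk hM.le (by positivity) ?_ hdecay ?_⟩
  · intro x hx
    rw [hk2]
    linarith [hineq x hx]
  · intro x hx
    calc w x ≤ (|B| + 1) * Real.exp (k * M) * Real.exp (-k * M) := by
          rw [mul_assoc, ← Real.exp_add]
          simpa using (hB x).trans ((le_abs_self B).trans (lt_add_one _).le)
      _ ≤ (|B| + 1) * Real.exp (k * M) * Real.exp (-k * ‖x‖) :=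
          mul_le_mul_of_nonneg_left (Real.exp_le_exp.2 (by nlinarith)) (by positivity)

/-- If `w ≥ 0` is a bounded `C²` function on `ℝ³` vanishing at infinity
and satisfying `−Δw ≤ (μ/2) w` outside `B_M(0)` with `μ < 0`, then
`w(x) ≤ C e^{−√(|μ|/2)|x|}` for some `C > 0`. -/
theorem stmt8 (w : EuclideanSpace ℝ (Fin 3) → ℝ) (hw : ContDiff ℝ 2 w)
    (μ M : ℝ) (hμ : μ < 0) (hM : 0 < M)
    (hineq : ∀ x, M ≤ ‖x‖ → -laplacian w x ≤ (μ / 2) * w x)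
    (hnonneg : ∀ x, 0 ≤ w x)
    (hbdd : ∃ B : ℝ, ∀ x, w x ≤ B)
    (hdecay : Tendsto w (cocompact (EuclideanSpace ℝ (Fin 3))) (nhds 0)) :
    ∃ C > (0 : ℝ), ∀ x, w x ≤ C * Real.exp (-Real.sqrt (|μ| / 2) * ‖x‖) :=
  stmt8_general w hw μ M hμ hM hineq hbdd hdecay
end
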